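/- Let V, Q be real Hilbert spaces, a : V × V → ℝ a continuous symmetric bilinear form, k : Q × Q → ℝ and b : V × Q → ℝ continuous bilinear forms, and f : ℝ → V*, g : ℝ → Q* continuous. Suppose u : ℝ → V is continuously differentiable on [0,T] with derivative u', p : ℝ → Q is continuous on [0,T], and for every t ∈ [0,T]: a(u(t),v) − b(v,p(t)) = f(t)(v) for all v ∈ V and b(u'(t),q) + k(p(t),q) = g(t)(q) for all q ∈ Q. Then for every t ∈ [0,T]: ½ a(u(t),u(t)) + ∫₀ᵗ k(p(s),p(s)) ds = ½ a(u(0),u(0)) + ∫₀ᵗ [ f(s)(u'(s)) + g(s)(p(s)) ] ds. -/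

import Mathlib

open Set

lemma hasDerivAt_half_apply_self {E : Type*} [NormedAddCommGroup E] [NormedSpace ℝ E]
    (A : E →L[ℝ] E →L[ℝ] ℝ) (hA : ∀ x y, A x y = A y x) {u : ℝ → E} {u' : E} {t : ℝ}
    (hu : HasDerivAt u u' t) :
    HasDerivAt (fun s => (1 / 2) * A (u s) (u s)) (A (u t) u') t := by
  have h := ((A.hasFDerivAt.comp_hasDerivAt t hu).clm_apply hu).const_mul (1 / 2 : ℝ)
  refine h.congr_deriv ?_
  simp only [Function.comp_apply, hA u' (u t)]
  ring

lemma add_integral_eq_add_integral_of_hasDerivAt_sub {E F G : ℝ → ℝ} {a b : ℝ}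
    (hE : ∀ s ∈ uIcc a b, HasDerivAt E (F s - G s) s)
    (hF : ContinuousOn F (uIcc a b)) (hG : ContinuousOn G (uIcc a b)) :
    E b + ∫ s in a..b, G s = E a + ∫ s in a..b, F s := by
  have hftc := intervalIntegral.integral_eq_sub_of_hasDerivAt hE
    (hF.sub hG).intervalIntegrable
  rw [intervalIntegral.integral_sub hF.intervalIntegrable hG.intervalIntegrable] at hftc
  linarith

lemma norm_apply_apply_le_of_abs_le {E F : Type*} [SeminormedAddCommGroup E]
    [SeminormedAddCommGroup F] (a : E → F → ℝ) {C : ℝ} (h : ∀ x y, |a x y| ≤ C * ‖x‖ * ‖y‖)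
    (x : E) (y : F) : ‖a x y‖ ≤ C * ‖x‖ * ‖y‖ :=
  (Real.norm_eq_abs _).trans_le (h x y)

theorem stmt_5_general {V Q : Type*} [NormedAddCommGroup V] [InnerProductSpace ℝ V]
    [NormedAddCommGroup Q] [InnerProductSpace ℝ Q]
    (a : V →ₗ[ℝ] V →ₗ[ℝ] ℝ) (k : Q →ₗ[ℝ] Q →ₗ[ℝ] ℝ) (b : V →ₗ[ℝ] Q →ₗ[ℝ] ℝ)
    (Ca Ck : ℝ)
    (hsymm : ∀ u v : V, a u v = a v u)
    (ha : ∀ u v : V, |a u v| ≤ Ca * ‖u‖ * ‖v‖)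
    (hk : ∀ p q : Q, |k p q| ≤ Ck * ‖p‖ * ‖q‖)
    (T : ℝ)
    (f : ℝ → V →L[ℝ] ℝ) (g : ℝ → Q →L[ℝ] ℝ) (hf : Continuous f) (hg : Continuous g)
    (u u' : ℝ → V) (p : ℝ → Q)
    (hu : ∀ t ∈ Set.Icc (0 : ℝ) T, HasDerivAt u (u' t) t)
    (hu' : ContinuousOn u' (Set.Icc (0 : ℝ) T))
    (hp : ContinuousOn p (Set.Icc (0 : ℝ) T))
    (heq1 : ∀ t ∈ Set.Icc (0 : ℝ) T, ∀ v : V, a (u t) v - b v (p t) = f t v)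
    (heq2 : ∀ t ∈ Set.Icc (0 : ℝ) T, ∀ q : Q, b (u' t) q + k (p t) q = g t q) :
    ∀ t ∈ Set.Icc (0 : ℝ) T,
      (1 / 2) * a (u t) (u t) + ∫ s in (0 : ℝ)..t, k (p s) (p s)
        = (1 / 2) * a (u 0) (u 0) + ∫ s in (0 : ℝ)..t, (f s (u' s) + g s (p s)) := by
  rintro t ⟨ht0, htT⟩
  have hsub : uIcc 0 t ⊆ Icc 0 T := by
    rw [uIcc_of_le ht0]
    exact Icc_subset_Icc_right htT
  let A := a.mkContinuous₂ Ca (norm_apply_apply_le_of_abs_le _ ha)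
  let K := k.mkContinuous₂ Ck (norm_apply_apply_le_of_abs_le _ hk)
  refine add_integral_eq_add_integral_of_hasDerivAt_sub
    (E := fun s => (1 / 2) * a (u s) (u s)) (F := fun s => f s (u' s) + g s (p s))
    (G := fun s => K (p s) (p s)) (fun s hs => ?_)
    (((hf.continuousOn.clm_apply hu').add (hg.continuousOn.clm_apply hp)).mono hsub)
    (((K.continuous.comp_continuousOn hp).clm_apply hp).mono hsub)
  -- d/ds ½ a(u,u) = a(u,u') = f(u') + b(u',p) = f(u') + g(p) - k(p,p)
  refine (hasDerivAt_half_apply_self A hsymm (hu s (hsub hs))).congr_deriv ?_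
  simp only [A, K, LinearMap.mkContinuous₂_apply]
  linarith [heq1 s (hsub hs) (u' s), heq2 s (hsub hs) (p s)]

/-- Integrated energy identity. If `(u, p)` is a continuously differentiable /
continuous solution of the abstract Biot system on `[0, T]` with continuous data `f`, `g`,
then for every `t ∈ [0, T]`:
`½ a(u(t),u(t)) + ∫₀ᵗ k(p(s),p(s)) ds = ½ a(u(0),u(0)) + ∫₀ᵗ (f(s)(u'(s)) + g(s)(p(s))) ds`. -/
theorem stmt_5 {V Q : Type*} [NormedAddCommGroup V] [InnerProductSpace ℝ V] [CompleteSpace V]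
    [NormedAddCommGroup Q] [InnerProductSpace ℝ Q] [CompleteSpace Q]
    (a : V →ₗ[ℝ] V →ₗ[ℝ] ℝ) (k : Q →ₗ[ℝ] Q →ₗ[ℝ] ℝ) (b : V →ₗ[ℝ] Q →ₗ[ℝ] ℝ)
    (Ca Ck Cb : ℝ)
    (hsymm : ∀ u v : V, a u v = a v u)
    (ha : ∀ u v : V, |a u v| ≤ Ca * ‖u‖ * ‖v‖)
    (hk : ∀ p q : Q, |k p q| ≤ Ck * ‖p‖ * ‖q‖)
    (hb : ∀ (v : V) (q : Q), |b v q| ≤ Cb * ‖v‖ * ‖q‖)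
    (T : ℝ) (hT : 0 ≤ T)
    (f : ℝ → V →L[ℝ] ℝ) (g : ℝ → Q →L[ℝ] ℝ) (hf : Continuous f) (hg : Continuous g)
    (u u' : ℝ → V) (p : ℝ → Q)
    (hu : ∀ t ∈ Set.Icc (0 : ℝ) T, HasDerivAt u (u' t) t)
    (hu' : ContinuousOn u' (Set.Icc (0 : ℝ) T))
    (hp : ContinuousOn p (Set.Icc (0 : ℝ) T))
    (heq1 : ∀ t ∈ Set.Icc (0 : ℝ) T, ∀ v : V, a (u t) v - b v (p t) = f t v)
    (heq2 : ∀ t ∈ Set.Icc (0 : ℝ) T, ∀ q : Q, b (u' t) q + k (p t) q = g t q) :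
    ∀ t ∈ Set.Icc (0 : ℝ) T,
      (1 / 2) * a (u t) (u t) + ∫ s in (0 : ℝ)..t, k (p s) (p s)
        = (1 / 2) * a (u 0) (u 0) + ∫ s in (0 : ℝ)..t, (f s (u' s) + g s (p s)) :=
  stmt_5_general a k b Ca Ck hsymm ha hk T f g hf hg u u' p hu hu' hp heq1 heq2
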